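/- arXiv:1611.07809 — 2 statements merged into one kernel-verified Lean document; each statement's English description precedes it below -/
import Mathlib

section
/- For every a > 0 and every integer n ≥ 1, there exists a compact operator K_n on L²(π) such that Pⁿ = K_n + R_aⁿ + (R_{a^c} + T_{a^c})ⁿ. -/
open MeasureTheory Filter Topology

noncomputable section

/-- The probability measure on `ℝ` with density `π` w.r.t. Lebesgue measure. -/
def piMeas (π : ℝ → ℝ) : Measure ℝ := volume.withDensity fun x => ENNReal.ofReal (π x)

/-- `t(x,y) = min(q(x,y), π(y) q(y,x) / π(x))`. -/
def mhT (π : ℝ → ℝ) (q : ℝ → ℝ → ℝ) (x y : ℝ) : ℝ := min (q x y) (π y * q y x / π x)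

/-- The rejection probability `r(x) = 1 - ∫ t(x,y) dy`. -/
def mhR (π : ℝ → ℝ) (q : ℝ → ℝ → ℝ) (x : ℝ) : ℝ := 1 - ∫ y, mhT π q x y


/-!
Write `P = C + A + B` with `A = R_a`, `B = R_{a^c} + T_{a^c}` and
`C = P - A - B = 1_{|x| ≤ a} ∫ t(x, y) f(y) dy`. By the finite range assumption `C` and
`B A = T_{a^c} R_a` are integral operators whose kernels are continuous functions restricted to
products of subsets of `[-a-s, a+s]`, while `A B = 0`. Such operators are compact: a partition of
unity approximates the kernel uniformly by finite sums `∑ aᵢ(x) bᵢ(y)`, i.e. by finite-rank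
operators, and the error is small in operator norm because `π` is bounded below on compacts, so
that `∫_{[-b, b]} |f| dy ≤ C ‖f‖_{L²(π)}`. Modulo the ideal of compact operators
`P ≡ A + B` with `A B = 0 = B A`, hence `Pⁿ ≡ Aⁿ + Bⁿ` for `n ≥ 1`.
-/

open Set

section CompactOperatorIdeal

variable (𝕜 E : Type*) [NontriviallyNormedField 𝕜] [NormedAddCommGroup E] [NormedSpace 𝕜 E]

def compactOperatorIdeal : TwoSidedIdeal (E →L[𝕜] E) :=
  .mk' {T | IsCompactOperator T} isCompactOperator_zero (fun hS hT => hS.add hT)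
    (fun hT => hT.neg) (fun {S _} hT => hT.clm_comp S) (fun {_ T} hS => hS.comp_clm T)

variable {𝕜 E} in
theorem mem_compactOperatorIdeal {T : E →L[𝕜] E} :
    T ∈ compactOperatorIdeal 𝕜 E ↔ IsCompactOperator T :=
  TwoSidedIdeal.mem_mk' ..

end CompactOperatorIdeal

theorem TwoSidedIdeal.pow_sub_pow_sub_pow_mem {R : Type*} [Ring R] (I : TwoSidedIdeal R)
    {p a b : R} (hp : p - a - b ∈ I) (hab : a * b = 0) (hba : b * a ∈ I) {n : ℕ}
    (hn : n ≠ 0) :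
    p ^ n - a ^ n - b ^ n ∈ I := by
  obtain ⟨m, rfl⟩ := Nat.exists_eq_succ_of_ne_zero hn
  clear hn
  induction m with
  | zero => simpa using hp
  | succ m ih =>
    have key : p ^ (m + 2) - a ^ (m + 2) - b ^ (m + 2) =
        p * (p ^ (m + 1) - a ^ (m + 1) - b ^ (m + 1)) + (p - a - b) * a ^ (m + 1)
          + (p - a - b) * b ^ (m + 1) + b * a * a ^ m + a * b * b ^ m := by
      simp only [pow_succ']; noncomm_ring
    rw [key, hab, zero_mul, add_zero]
    exact I.add_mem (I.add_mem (I.add_mem (I.mul_mem_left _ _ ih)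
      (I.mul_mem_right _ _ hp)) (I.mul_mem_right _ _ hp)) (I.mul_mem_right _ _ hba)

section SeparableApproximation

universe u v

open Metric in
theorem exists_sum_mul_approx {X : Type u} {Y : Type v} [MetricSpace X] [MetricSpace Y]
    {K : Set X} {L : Set Y} (hK : IsCompact K) (hL : IsCompact L) {g : X × Y → ℝ}
    (hg : ContinuousOn g (K ×ˢ L)) {ε : ℝ} (hε : 0 < ε) :
    ∃ (ι : Type (max u v)) (_ : Fintype ι) (a : ι → X → ℝ) (b : ι → Y → ℝ),
      (∀ i, Continuous (a i)) ∧ (∀ i, Continuous (b i)) ∧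
      ∀ x ∈ K, ∀ y ∈ L, |g (x, y) - ∑ i, a i x * b i y| ≤ ε := by
  obtain ⟨δ, hδ, hgδ⟩ := uniformContinuousOn_iff_le.1
    ((hK.prod hL).uniformContinuousOn_of_continuous hg) ε hε
  obtain ⟨s, hsK, hKs⟩ := hK.elim_nhds_subcover (ball · δ) fun x _ => ball_mem_nhds x hδ
  obtain ⟨t, htL, hLt⟩ := hL.elim_nhds_subcover (ball · δ) fun y _ => ball_mem_nhds y hδ
  obtain ⟨φ, hφ⟩ := PartitionOfUnity.exists_isSubordinate hK.isClosed (fun c : s => ball c δ)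
    (fun _ => isOpen_ball) (by simpa [iUnion_subtype] using hKs)
  obtain ⟨ψ, hψ⟩ := PartitionOfUnity.exists_isSubordinate hL.isClosed (fun d : t => ball d δ)
    (fun _ => isOpen_ball) (by simpa [iUnion_subtype] using hLt)
  refine ⟨ULift (s × t), inferInstance, fun p x => g (p.down.1, p.down.2) * φ p.down.1 x,
    fun p y => ψ p.down.2 y, fun p => by fun_prop, fun p => by fun_prop, fun x hx y hy => ?_⟩
  have hφ1 : ∑ c, φ c x = 1 := by rw [← finsum_eq_sum_of_fintype]; exact φ.sum_eq_one hx
  have hψ1 : ∑ d, ψ d y = 1 := by rw [← finsum_eq_sum_of_fintype]; exact ψ.sum_eq_one hy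
  have hdiff :
      g (x, y) - ∑ p : ULift (s × t), g (p.down.1, p.down.2) * φ p.down.1 x * ψ p.down.2 y
        = ∑ c, ∑ d, φ c x * ψ d y * (g (x, y) - g (c, d)) := by
    have hsum : ∑ p : ULift (s × t), g (p.down.1, p.down.2) * φ p.down.1 x * ψ p.down.2 y
        = ∑ c, ∑ d, φ c x * ψ d y * g (c, d) := by
      rw [← Equiv.ulift.symm.sum_comp, Fintype.sum_prod_type]
      simp only [Equiv.ulift_symm_down]
      exact Finset.sum_congr rfl fun c _ => Finset.sum_congr rfl fun d _ => by ring
    have hconst : ∑ c, ∑ d, φ c x * ψ d y * g (x, y) = g (x, y) := by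
      simp only [← Finset.sum_mul, ← Finset.mul_sum, hψ1, hφ1, mul_one, one_mul]
    rw [hsum]
    simp only [mul_sub, Finset.sum_sub_distrib, hconst]
  have hterm (c : s) (d : t) :
      |φ c x * ψ d y * (g (x, y) - g (c, d))| ≤ φ c x * ψ d y * ε := by
    rw [abs_mul, abs_of_nonneg (mul_nonneg (φ.nonneg c x) (ψ.nonneg d y))]
    rcases eq_or_ne (φ c x * ψ d y) 0 with h | h
    · simp [h]
    refine mul_le_mul_of_nonneg_left ?_ (mul_nonneg (φ.nonneg c x) (ψ.nonneg d y))
    have hxc : x ∈ ball (c : X) δ := hφ c (subset_tsupport _ (left_ne_zero_of_mul h))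
    have hyd : y ∈ ball (d : Y) δ := hψ d (subset_tsupport _ (right_ne_zero_of_mul h))
    exact hgδ _ ⟨hx, hy⟩ _ ⟨hsK c c.2, htL d d.2⟩
      (max_le (mem_ball.1 hxc).le (mem_ball.1 hyd).le)
  rw [hdiff]
  calc |∑ c, ∑ d, φ c x * ψ d y * (g (x, y) - g (c, d))|
      ≤ ∑ c, ∑ d, φ c x * ψ d y * ε :=
        (Finset.abs_sum_le_sum_abs _ _).trans (Finset.sum_le_sum fun c _ =>
          (Finset.abs_sum_le_sum_abs _ _).trans (Finset.sum_le_sum fun d _ => hterm c d))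
    _ = ε := by simp only [← Finset.sum_mul, ← Finset.mul_sum, hψ1, hφ1, mul_one, one_mul]

end SeparableApproximation

section Density

variable {π : ℝ → ℝ}

theorem isProbabilityMeasure_piMeas (hπ : ∀ x, 0 ≤ π x) (hπprob : ∫ x, π x = 1) :
    IsProbabilityMeasure (piMeas π) := by
  have hint : Integrable π := Integrable.of_integral_ne_zero (by rw [hπprob]; exact one_ne_zero)
  constructor
  rw [piMeas, withDensity_apply _ MeasurableSet.univ, Measure.restrict_univ,
    ← ofReal_integral_eq_lintegral_ofReal hint (.of_forall hπ), hπprob, ENNReal.ofReal_one]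

theorem volume_absolutelyContinuous_piMeas (hπpos : ∀ x, 0 < π x) (hπ : Measurable π) :
    volume ≪ piMeas π :=
  withDensity_absolutelyContinuous' (by fun_prop)
    (.of_forall fun x => (ENNReal.ofReal_pos.2 (hπpos x)).ne')

variable {E : Type*} [NormedAddCommGroup E] [NormedSpace ℝ E]

theorem integral_piMeas (hπ : Measurable π) (hπnn : ∀ x, 0 ≤ π x) (g : ℝ → E) :
    ∫ x, g x ∂piMeas π = ∫ x, π x • g x := by
  rw [piMeas, integral_withDensity_eq_integral_toReal_smul (by fun_prop)
    (.of_forall fun _ => ENNReal.ofReal_lt_top)]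
  simp_rw [ENNReal.toReal_ofReal (hπnn _)]

theorem integrable_piMeas_iff (hπ : Measurable π) (hπnn : ∀ x, 0 ≤ π x) {g : ℝ → E} :
    Integrable g (piMeas π) ↔ Integrable (fun x => π x • g x) := by
  rw [piMeas, integrable_withDensity_iff_integrable_smul' (by fun_prop)
    (.of_forall fun _ => ENNReal.ofReal_lt_top)]
  simp_rw [ENNReal.toReal_ofReal (hπnn _)]

end Density

section DensityQuotient

variable {π : ℝ → ℝ} {𝕜 : Type*} [RCLike 𝕜] {K : Set ℝ} {w : ℝ → ℝ} {M : ℝ}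

theorem memLp_div_density [IsFiniteMeasure (piMeas π)] (hπpos : ∀ x, 0 < π x)
    (hπcont : Continuous π) (hK : IsCompact K) (hw : Measurable w) (hwM : ∀ y, |w y| ≤ M)
    (hwK : ∀ y ∉ K, w y = 0) :
    MemLp (fun y => ((w y / π y : ℝ) : 𝕜)) 2 (piMeas π) := by
  obtain ⟨m, hm, hmπ⟩ := hK.exists_forall_le' hπcont.continuousOn fun y _ => hπpos y
  refine .of_bound (RCLike.measurable_ofReal.comp (hw.div hπcont.measurable)).aestronglyMeasurable
    (M / m) (.of_forall fun y => ?_)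
  rw [RCLike.norm_ofReal, abs_div, abs_of_pos (hπpos y)]
  by_cases hy : y ∈ K
  · exact div_le_div₀ ((abs_nonneg _).trans (hwM y)) (hwM y) hm (hmπ y hy)
  · rw [hwK y hy, abs_zero, zero_div]
    exact div_nonneg ((abs_nonneg _).trans (hwM y)) hm.le

theorem ae_smul_inner_toLp_div_density [IsFiniteMeasure (piMeas π)] (hπpos : ∀ x, 0 < π x)
    (hπcont : Continuous π) (hK : IsCompact K) (hw : Measurable w) (hwM : ∀ y, |w y| ≤ M)
    (hwK : ∀ y ∉ K, w y = 0) (f : Lp 𝕜 2 (piMeas π)) :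
    ∀ᵐ y, π y • inner 𝕜 ((memLp_div_density hπpos hπcont hK hw hwM hwK).toLp _ y) (f y)
      = (w y : 𝕜) * f y := by
  filter_upwards [(volume_absolutelyContinuous_piMeas hπpos hπcont.measurable).ae_le
    (MemLp.coeFn_toLp (memLp_div_density (𝕜 := 𝕜) hπpos hπcont hK hw hwM hwK))] with y hy
  rw [hy, RCLike.inner_apply', RCLike.conj_ofReal, RCLike.real_smul_eq_coe_mul, ← mul_assoc,
    ← RCLike.ofReal_mul, mul_div_cancel₀ _ (hπpos y).ne']

theorem inner_toLp_div_density [IsFiniteMeasure (piMeas π)] (hπpos : ∀ x, 0 < π x)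
    (hπcont : Continuous π) (hK : IsCompact K) (hw : Measurable w) (hwM : ∀ y, |w y| ≤ M)
    (hwK : ∀ y ∉ K, w y = 0) (f : Lp 𝕜 2 (piMeas π)) :
    inner 𝕜 ((memLp_div_density hπpos hπcont hK hw hwM hwK).toLp _) f
      = ∫ y, (w y : 𝕜) * f y := by
  rw [L2.inner_def, integral_piMeas hπcont.measurable fun x => (hπpos x).le]
  exact integral_congr_ae (ae_smul_inner_toLp_div_density hπpos hπcont hK hw hwM hwK f)

theorem integrable_mul_Lp [IsFiniteMeasure (piMeas π)] (hπpos : ∀ x, 0 < π x)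
    (hπcont : Continuous π) (hK : IsCompact K) (hw : Measurable w) (hwM : ∀ y, |w y| ≤ M)
    (hwK : ∀ y ∉ K, w y = 0) (f : Lp 𝕜 2 (piMeas π)) :
    Integrable fun y => (w y : 𝕜) * f y := by
  have h := L2.integrable_inner (𝕜 := 𝕜)
    ((memLp_div_density hπpos hπcont hK hw hwM hwK).toLp _) f
  rw [integrable_piMeas_iff hπcont.measurable fun x => (hπpos x).le] at h
  exact h.congr (ae_smul_inner_toLp_div_density hπpos hπcont hK hw hwM hwK f)

end DensityQuotient

section LocalIntegrability

variable {π : ℝ → ℝ} {𝕜 : Type*} [RCLike 𝕜] {K : Set ℝ}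

theorem integrableOn_of_Lp [IsFiniteMeasure (piMeas π)] (hπpos : ∀ x, 0 < π x)
    (hπcont : Continuous π) (hK : IsCompact K) (f : Lp 𝕜 2 (piMeas π)) :
    IntegrableOn f K := by
  have h := integrable_mul_Lp hπpos hπcont hK (w := K.indicator 1) (M := 1)
    (measurable_one.indicator hK.measurableSet) (fun y => by by_cases hy : y ∈ K <;> simp [hy])
    (fun y hy => indicator_of_notMem hy _) f
  rw [← integrable_indicator_iff hK.measurableSet]
  refine h.congr (.of_forall fun y => ?_)
  by_cases hy : y ∈ K <;> simp [hy]

theorem exists_setIntegral_norm_le [IsFiniteMeasure (piMeas π)] (hπpos : ∀ x, 0 < π x)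
    (hπcont : Continuous π) (hK : IsCompact K) :
    ∃ C, 0 ≤ C ∧ ∀ f : Lp 𝕜 2 (piMeas π), ∫ y in K, ‖f y‖ ≤ C * ‖f‖ := by
  have hmeas : Measurable (K.indicator (1 : ℝ → ℝ)) :=
    measurable_one.indicator hK.measurableSet
  have hbdd : ∀ y, |K.indicator (1 : ℝ → ℝ) y| ≤ 1 := fun y => by
    by_cases hy : y ∈ K <;> simp [hy]
  have hsupp : ∀ y ∉ K, K.indicator (1 : ℝ → ℝ) y = 0 :=
    fun y hy => indicator_of_notMem hy _
  set φ := (memLp_div_density (𝕜 := ℝ) hπpos hπcont hK hmeas hbdd hsupp).toLp _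
  refine ⟨‖φ‖, norm_nonneg _, fun f => ?_⟩
  set g := (Lp.memLp f).norm.toLp _
  have hg : ‖g‖ = ‖f‖ := by rw [Lp.norm_toLp, Lp.norm_def, eLpNorm_norm]
  have key : ∫ y in K, ‖f y‖ = inner ℝ φ g := by
    rw [inner_toLp_div_density hπpos hπcont hK hmeas hbdd hsupp,
      ← integral_indicator hK.measurableSet]
    refine integral_congr_ae ?_
    filter_upwards [(volume_absolutelyContinuous_piMeas hπpos hπcont.measurable).ae_le
      (Lp.memLp f).norm.coeFn_toLp] with y hy
    by_cases hy' : y ∈ K <;> simp [hy, hy', g]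
  rw [key, ← hg]
  exact real_inner_le_norm _ _

end LocalIntegrability

section KernelOperators

variable {π : ℝ → ℝ}

def HasKernel (U : Lp ℂ 2 (piMeas π) →L[ℂ] Lp ℂ 2 (piMeas π)) (k : ℝ → ℝ → ℝ) :
    Prop :=
  ∀ f, ⇑(U f) =ᵐ[piMeas π] fun x => ∫ y, (k x y : ℂ) * f y

namespace HasKernel

variable {U V : Lp ℂ 2 (piMeas π) →L[ℂ] Lp ℂ 2 (piMeas π)} {k l : ℝ → ℝ → ℝ}

theorem add (hU : HasKernel U k) (hV : HasKernel V l)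
    (hk : ∀ x (f : Lp ℂ 2 (piMeas π)), Integrable fun y => (k x y : ℂ) * f y)
    (hl : ∀ x (f : Lp ℂ 2 (piMeas π)), Integrable fun y => (l x y : ℂ) * f y) :
    HasKernel (U + V) fun x y => k x y + l x y := fun f => by
  filter_upwards [Lp.coeFn_add (U f) (V f), hU f, hV f] with x h hUx hVx
  rw [_root_.add_apply, h, Pi.add_apply, hUx, hVx,
    ← integral_add (hk x f) (hl x f)]
  simp only [Complex.ofReal_add, add_mul]

theorem sub (hU : HasKernel U k) (hV : HasKernel V l)
    (hk : ∀ x (f : Lp ℂ 2 (piMeas π)), Integrable fun y => (k x y : ℂ) * f y)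
    (hl : ∀ x (f : Lp ℂ 2 (piMeas π)), Integrable fun y => (l x y : ℂ) * f y) :
    HasKernel (U - V) fun x y => k x y - l x y := fun f => by
  filter_upwards [Lp.coeFn_sub (U f) (V f), hU f, hV f] with x h hUx hVx
  rw [_root_.sub_apply, h, Pi.sub_apply, hUx, hVx,
    ← integral_sub (hk x f) (hl x f)]
  simp only [Complex.ofReal_sub, sub_mul]

theorem finset_sum {ι : Type*} (s : Finset ι)
    {U : ι → Lp ℂ 2 (piMeas π) →L[ℂ] Lp ℂ 2 (piMeas π)} {k : ι → ℝ → ℝ → ℝ}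
    (hU : ∀ i ∈ s, HasKernel (U i) (k i))
    (hk : ∀ i ∈ s, ∀ x (f : Lp ℂ 2 (piMeas π)), Integrable fun y => (k i x y : ℂ) * f y) :
    HasKernel (∑ i ∈ s, U i) fun x y => ∑ i ∈ s, k i x y := by
  classical
  induction s using Finset.induction_on with
  | empty =>
    intro f
    filter_upwards [Lp.coeFn_zero ℂ 2 (piMeas π)] with x hx
    simp only [Finset.sum_empty, _root_.zero_apply, hx, Pi.zero_apply,
      Complex.ofReal_zero, zero_mul, integral_zero]
  | insert i s hi ih =>
    simp only [Finset.sum_insert hi]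
    refine (hU i (s.mem_insert_self i)).add
      (ih (fun j hj => hU j (Finset.mem_insert_of_mem hj))
        fun j hj => hk j (Finset.mem_insert_of_mem hj)) (hk i (s.mem_insert_self i)) ?_
    intro x f
    simp only [Complex.ofReal_sum, Finset.sum_mul]
    exact integrable_finsetSum s fun j hj => hk j (Finset.mem_insert_of_mem hj) x f

theorem opNorm_le [IsProbabilityMeasure (piMeas π)] (hπpos : ∀ x, 0 < π x)
    (hπcont : Continuous π) {K : Set ℝ} (hK : IsCompact K) {C ε : ℝ} (hC : 0 ≤ C)
    (hCK : ∀ f : Lp ℂ 2 (piMeas π), ∫ y in K, ‖f y‖ ≤ C * ‖f‖) (hε : 0 ≤ ε)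
    (hU : HasKernel U k) (hkε : ∀ x y, |k x y| ≤ ε) (hkK : ∀ x, ∀ y ∉ K, k x y = 0) :
    ‖U‖ ≤ ε * C := by
  refine U.opNorm_le_bound (mul_nonneg hε hC) fun f => ?_
  have hbound : ∀ᵐ x ∂piMeas π, ‖U f x‖ ≤ ε * C * ‖f‖ := by
    filter_upwards [hU f] with x hx
    rw [hx, mul_assoc]
    refine le_trans ?_ (mul_le_mul_of_nonneg_left (hCK f) hε)
    rw [← integral_const_mul, ← integral_indicator hK.measurableSet]
    refine norm_integral_le_of_norm_le
      ((integrable_indicator_iff hK.measurableSet).2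
        ((integrableOn_of_Lp hπpos hπcont hK f).norm.const_mul ε))
      (.of_forall fun y => ?_)
    by_cases hy : y ∈ K
    · rw [indicator_of_mem hy, norm_mul, Complex.norm_real, Real.norm_eq_abs]
      exact mul_le_mul_of_nonneg_right (hkε x y) (norm_nonneg _)
    · simp [indicator_of_notMem hy, hkK x y hy]
  simpa [measureUnivNNReal] using Lp.norm_le_of_ae_bound (by positivity) hbound

end HasKernel

theorem hasKernel_toSpanSingleton_comp_innerSL [IsFiniteMeasure (piMeas π)]
    (hπpos : ∀ x, 0 < π x) (hπcont : Continuous π) {K : Set ℝ} (hK : IsCompact K)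
    {a w : ℝ → ℝ} {M : ℝ} (ha : MemLp (fun x => (a x : ℂ)) 2 (piMeas π))
    (hw : Measurable w) (hwM : ∀ y, |w y| ≤ M) (hwK : ∀ y ∉ K, w y = 0) :
    HasKernel ((ContinuousLinearMap.toSpanSingleton ℂ (ha.toLp _)).comp
      (innerSL ℂ ((memLp_div_density hπpos hπcont hK hw hwM hwK).toLp _)))
      fun x y => a x * w y := fun f => by
  filter_upwards [Lp.coeFn_smul
    (inner ℂ ((memLp_div_density hπpos hπcont hK hw hwM hwK).toLp _) f) (ha.toLp _),
    ha.coeFn_toLp] with x hx hax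
  rw [ContinuousLinearMap.comp_apply, innerSL_apply_apply,
    ContinuousLinearMap.toSpanSingleton_apply, hx, Pi.smul_apply, hax, smul_eq_mul,
    inner_toLp_div_density hπpos hπcont hK hw hwM hwK, mul_comm, ← integral_const_mul]
  simp only [Complex.ofReal_mul, mul_assoc]
  rfl

end KernelOperators

section CompactKernel

variable {π : ℝ → ℝ}

theorem exists_abs_indicator_le {X : Type*} [TopologicalSpace X] {S K : Set X}
    (hK : IsCompact K) (hSK : S ⊆ K) {u : X → ℝ} (hu : ContinuousOn u K) :
    ∃ M, ∀ y, |S.indicator u y| ≤ M := by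
  obtain ⟨M, hM⟩ := hK.exists_bound_of_continuousOn hu
  refine ⟨max M 0, fun y => ?_⟩
  by_cases hy : y ∈ S
  · rw [indicator_of_mem hy, ← Real.norm_eq_abs]
    exact (hM y (hSK hy)).trans (le_max_left _ _)
  · simp [hy]

theorem integrable_indicator_prod_mul_Lp [IsFiniteMeasure (piMeas π)] (hπpos : ∀ x, 0 < π x)
    (hπcont : Continuous π) {K Sx Sy : Set ℝ} (hK : IsCompact K) (hSx : MeasurableSet Sx)
    (hSy : MeasurableSet Sy) (hSxK : Sx ⊆ K) (hSyK : Sy ⊆ K) {g : ℝ × ℝ → ℝ}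
    (hg : Continuous g)
    (x : ℝ) (f : Lp ℂ 2 (piMeas π)) :
    Integrable fun y => (((Sx ×ˢ Sy).indicator g (x, y) : ℝ) : ℂ) * f y := by
  obtain ⟨M, hM⟩ :=
    exists_abs_indicator_le (hK.prod hK) (prod_mono hSxK hSyK) hg.continuousOn
  exact integrable_mul_Lp hπpos hπcont hK
    ((hg.measurable.indicator (hSx.prod hSy)).comp measurable_prodMk_left) (fun y => hM (x, y))
    (fun y hy => indicator_of_notMem (fun h => hy (hSyK h.2)) _) f

theorem HasKernel.isCompactOperator [IsProbabilityMeasure (piMeas π)] (hπpos : ∀ x, 0 < π x)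
    (hπcont : Continuous π) {K Sx Sy : Set ℝ} (hK : IsCompact K) (hSx : MeasurableSet Sx)
    (hSy : MeasurableSet Sy) (hSxK : Sx ⊆ K) (hSyK : Sy ⊆ K) {g : ℝ × ℝ → ℝ}
    (hg : Continuous g)
    {U : Lp ℂ 2 (piMeas π) →L[ℂ] Lp ℂ 2 (piMeas π)}
    (hU : HasKernel U fun x y => (Sx ×ˢ Sy).indicator g (x, y)) : IsCompactOperator U := by
  obtain ⟨C, hC0, hCK⟩ := exists_setIntegral_norm_le (𝕜 := ℂ) hπpos hπcont hK
  refine isClosed_setOfPred_isCompactOperator.closure_subset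
    (Metric.mem_closure_iff.2 fun ε hε => ?_)
  set δ := ε / (C + 1)
  have hδ : 0 < δ := by positivity
  obtain ⟨ι, _, a, b, ha, hb, hab⟩ := exists_sum_mul_approx hK hK hg.continuousOn hδ
  choose Ma hMa using fun i => exists_abs_indicator_le hK hSxK (ha i).continuousOn
  choose Mb hMb using fun i => exists_abs_indicator_le hK hSyK (hb i).continuousOn
  have hbK (i : ι) : ∀ y ∉ K, Sy.indicator (b i) y = 0 :=
    fun y hy => indicator_of_notMem (fun h => hy (hSyK h)) _
  have hbm (i : ι) : Measurable (Sy.indicator (b i)) := (hb i).measurable.indicator hSy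
  have hχ (i : ι) : MemLp (fun x => ((Sx.indicator (a i) x : ℝ) : ℂ)) 2 (piMeas π) :=
    .of_bound (by fun_prop) (Ma i) (.of_forall fun x => by simpa using hMa i x)
  set F := ∑ i, (ContinuousLinearMap.toSpanSingleton ℂ ((hχ i).toLp _)).comp
    (innerSL ℂ
      ((memLp_div_density (𝕜 := ℂ) hπpos hπcont hK (hbm i) (hMb i) (hbK i)).toLp _))
  have hterm (i : ι) (x : ℝ) (f : Lp ℂ 2 (piMeas π)) :
      Integrable fun y => ((Sx.indicator (a i) x * Sy.indicator (b i) y : ℝ) : ℂ) * f y := by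
    refine ((integrable_mul_Lp hπpos hπcont hK (hbm i) (hMb i) (hbK i) f).const_mul
      ((Sx.indicator (a i) x : ℝ) : ℂ)).congr (.of_forall fun y => ?_)
    simp only [Complex.ofReal_mul, mul_assoc]
    rfl
  have hF : HasKernel F fun x y => ∑ i, Sx.indicator (a i) x * Sy.indicator (b i) y :=
    HasKernel.finset_sum _ (fun i _ => hasKernel_toSpanSingleton_comp_innerSL hπpos hπcont hK
      (hχ i) (hbm i) (hMb i) (hbK i))
      fun i _ => hterm i
  have hUF := hU.sub hF
    (integrable_indicator_prod_mul_Lp hπpos hπcont hK hSx hSy hSxK hSyK hg) fun x f => by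
      simpa only [Complex.ofReal_sum, Finset.sum_mul] using
        integrable_finsetSum _ fun i _ => hterm i x f
  refine ⟨F, ?_, ?_⟩
  · refine mem_compactOperatorIdeal.1 (sum_mem fun i _ => mem_compactOperatorIdeal.2 ?_)
    exact (isCompactOperator_of_locallyCompactSpace_rng
      (ContinuousLinearMap.toSpanSingleton ℂ ((hχ i).toLp _))).comp_clm _
  rw [dist_eq_norm]
  refine (hUF.opNorm_le hπpos hπcont hK hC0 hCK hδ.le (fun x y => ?_)
    fun x y hy => ?_).trans_lt ?_
  · by_cases hxy : x ∈ Sx ∧ y ∈ Sy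
    · simp only [indicator_of_mem (mk_mem_prod hxy.1 hxy.2), indicator_of_mem hxy.1,
        indicator_of_mem hxy.2]
      exact hab x (hSxK hxy.1) y (hSyK hxy.2)
    · have h0 (i : ι) : Sx.indicator (a i) x * Sy.indicator (b i) y = 0 := by
        by_cases hx : x ∈ Sx
        · simp [indicator_of_notMem (fun hy => hxy ⟨hx, hy⟩)]
        · simp [indicator_of_notMem hx]
      simp [h0, indicator_of_notMem (fun h : (x, y) ∈ Sx ×ˢ Sy => hxy h), hδ.le]
  · have hy' : y ∉ Sy := fun h => hy (hSyK h)
    simp [indicator_of_notMem hy', indicator_of_notMem (fun h : (x, y) ∈ Sx ×ˢ Sy => hy' h.2)]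
  · calc δ * C < δ * (C + 1) := by gcongr; linarith
      _ = ε := div_mul_cancel₀ ε (by positivity)

end CompactKernel

section FiniteRangeDecomposition

open Metric

variable {π : ℝ → ℝ} {r : ℝ → ℝ} {t : ℝ → ℝ → ℝ} {a s : ℝ}
  {P Ra Rac Tac : Lp ℂ 2 (piMeas π) →L[ℂ] Lp ℂ 2 (piMeas π)}

theorem hasKernel_P_sub_Ra_sub_Rac_sub_Tac (ht : ∀ x y, s < |y - x| → t x y = 0)
    (hP : ∀ f : Lp ℂ 2 (piMeas π),
      ⇑(P f) =ᵐ[piMeas π] fun x => (r x : ℂ) * f x + ∫ y, (t x y : ℂ) * f y)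
    (hRa : ∀ f : Lp ℂ 2 (piMeas π),
      ⇑(Ra f) =ᵐ[piMeas π] fun x => if |x| ≤ a then (r x : ℂ) * f x else 0)
    (hRac : ∀ f : Lp ℂ 2 (piMeas π),
      ⇑(Rac f) =ᵐ[piMeas π] fun x => if a < |x| then (r x : ℂ) * f x else 0)
    (hTac : ∀ f : Lp ℂ 2 (piMeas π),
      ⇑(Tac f) =ᵐ[piMeas π] fun x => if a < |x| then (∫ y, (t x y : ℂ) * f y) else 0) :
    HasKernel (P - Ra - Rac - Tac)
      fun x y => (closedBall 0 a ×ˢ closedBall 0 (a + s)).indicator (fun p => t p.1 p.2) (x, y) :=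
  fun f => by
  filter_upwards [Lp.coeFn_sub ((P - Ra - Rac) f) (Tac f), Lp.coeFn_sub ((P - Ra) f) (Rac f),
    Lp.coeFn_sub (P f) (Ra f), hP f, hRa f, hRac f, hTac f]
    with x h₁ h₂ h₃ hPx hRax hRacx hTacx
  simp only [_root_.sub_apply] at h₁ h₂ h₃ ⊢
  rw [h₁, Pi.sub_apply, h₂, Pi.sub_apply, h₃, Pi.sub_apply, hPx, hRax, hRacx, hTacx]
  by_cases hx : |x| ≤ a
  · simp only [hx, if_true, not_lt.2 hx, if_false, add_sub_cancel_left, sub_zero]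
    refine integral_congr_ae (.of_forall fun y => ?_)
    by_cases hy : |y| ≤ a + s
    · simp [hx, hy]
    · have hxy : s < |y - x| := by
        have := abs_sub_abs_le_abs_sub y x
        linarith
      simp [hy, ht x y hxy]
  · simp [hx, not_le.1 hx]

theorem hasKernel_Tac_mul_Ra (hπpos : ∀ x, 0 < π x) (hπ : Measurable π)
    (ht : ∀ x y, s < |y - x| → t x y = 0)
    (hRa : ∀ f : Lp ℂ 2 (piMeas π),
      ⇑(Ra f) =ᵐ[piMeas π] fun x => if |x| ≤ a then (r x : ℂ) * f x else 0)
    (hTac : ∀ f : Lp ℂ 2 (piMeas π),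
      ⇑(Tac f) =ᵐ[piMeas π] fun x => if a < |x| then (∫ y, (t x y : ℂ) * f y) else 0) :
    HasKernel (Tac * Ra) fun x y =>
      ((closedBall 0 (a + s) \ closedBall 0 a) ×ˢ closedBall 0 a).indicator
        (fun p => t p.1 p.2 * r p.2) (x, y) := fun f => by
  have hRaf := (volume_absolutelyContinuous_piMeas hπpos hπ).ae_le (hRa f)
  filter_upwards [hTac (Ra f)] with x hx
  rw [mul_apply_eq_comp, hx]
  by_cases hxa : a < |x|
  · rw [if_pos hxa]
    refine integral_congr_ae ?_
    filter_upwards [hRaf] with y hy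
    rw [hy]
    by_cases hya : |y| ≤ a
    · by_cases hxs : |x| ≤ a + s
      · simp [hxa, hxs, hya, mul_assoc]
      · have hxy : s < |y - x| := by
          have := abs_sub_abs_le_abs_sub x y
          rw [abs_sub_comm] at this
          linarith
        simp [hxs, hya, ht x y hxy]
    · simp [hya]
  · simp [hxa]

theorem Ra_mul_Rac_add_Tac_eq_zero
    (hRa : ∀ f : Lp ℂ 2 (piMeas π),
      ⇑(Ra f) =ᵐ[piMeas π] fun x => if |x| ≤ a then (r x : ℂ) * f x else 0)
    (hRac : ∀ f : Lp ℂ 2 (piMeas π),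
      ⇑(Rac f) =ᵐ[piMeas π] fun x => if a < |x| then (r x : ℂ) * f x else 0)
    (hTac : ∀ f : Lp ℂ 2 (piMeas π),
      ⇑(Tac f) =ᵐ[piMeas π] fun x => if a < |x| then (∫ y, (t x y : ℂ) * f y) else 0) :
    Ra * (Rac + Tac) = 0 := by
  ext1 f
  refine Lp.eq_zero_iff_ae_eq_zero.2 ?_
  filter_upwards [hRa ((Rac + Tac) f), Lp.coeFn_add (Rac f) (Tac f), hRac f, hTac f]
    with x hx hadd hRacx hTacx
  rw [mul_apply_eq_comp, hx]
  by_cases hxa : |x| ≤ a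
  · rw [_root_.add_apply, hadd, Pi.add_apply, hRacx, hTacx]
    simp [hxa, not_lt.2 hxa]
  · simp [hxa]

theorem Rac_add_Tac_mul_Ra
    (hRa : ∀ f : Lp ℂ 2 (piMeas π),
      ⇑(Ra f) =ᵐ[piMeas π] fun x => if |x| ≤ a then (r x : ℂ) * f x else 0)
    (hRac : ∀ f : Lp ℂ 2 (piMeas π),
      ⇑(Rac f) =ᵐ[piMeas π] fun x => if a < |x| then (r x : ℂ) * f x else 0) :
    (Rac + Tac) * Ra = Tac * Ra := by
  suffices Rac * Ra = 0 by rw [add_mul, this, zero_add]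
  ext1 f
  refine Lp.eq_zero_iff_ae_eq_zero.2 ?_
  filter_upwards [hRac (Ra f), hRa f] with x hx hRax
  rw [mul_apply_eq_comp, hx]
  by_cases hxa : a < |x|
  · simp [hxa, hRax, not_le.2 hxa]
  · simp [hxa]

end FiniteRangeDecomposition

section MetropolisHastings

variable {π : ℝ → ℝ} {q : ℝ → ℝ → ℝ} {s : ℝ}

theorem continuous_mhT (hπpos : ∀ x, 0 < π x) (hπcont : Continuous π)
    (hqcont : Continuous fun p : ℝ × ℝ => q p.1 p.2) :
    Continuous fun p : ℝ × ℝ => mhT π q p.1 p.2 :=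
  hqcont.min ((by fun_prop : Continuous fun p : ℝ × ℝ => π p.2 * q p.2 p.1).div (by fun_prop)
    fun p => (hπpos p.1).ne')

theorem mhT_eq_zero (hπ : ∀ x, 0 ≤ π x) (hqnn : ∀ x y, 0 ≤ q x y)
    (hrange : ∀ x u : ℝ, s < |u| → q x (x + u) = 0) {x y : ℝ} (hxy : s < |y - x|) :
    mhT π q x y = 0 := by
  have hq : q x y = 0 := by simpa using hrange x (y - x) hxy
  rw [mhT, hq]
  exact min_eq_left (div_nonneg (mul_nonneg (hπ y) (hqnn y x)) (hπ x))

theorem continuous_mhR (hπpos : ∀ x, 0 < π x) (hπcont : Continuous π)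
    (hqnn : ∀ x y, 0 ≤ q x y) (hqcont : Continuous fun p : ℝ × ℝ => q p.1 p.2)
    (hrange : ∀ x u : ℝ, s < |u| → q x (x + u) = 0) :
    Continuous (mhR π q) := by
  -- after the shift `y = x + u` the integrand lives on the fixed compact set `|u| ≤ s`
  have hshift : (fun x => ∫ y, mhT π q x y)
      = fun x => ∫ u in Metric.closedBall 0 s, mhT π q x (x + u) := by
    funext x
    rw [← integral_add_left_eq_self _ x, setIntegral_eq_integral_of_forall_compl_eq_zero]
    intro u hu
    refine mhT_eq_zero (fun x => (hπpos x).le) hqnn hrange ?_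
    simpa using hu
  refine continuous_const.sub (hshift ▸ continuous_parametric_integral_of_continuous ?_
    (isCompact_closedBall 0 s))
  exact (continuous_mhT hπpos hπcont hqcont).comp
    (continuous_fst.prodMk (continuous_fst.add continuous_snd))

end MetropolisHastings

theorem pow_decomposition_general
    (π : ℝ → ℝ) (hπpos : ∀ x, 0 < π x) (hπcont : Continuous π)
    (hπprob : ∫ x, π x = 1)
    (q : ℝ → ℝ → ℝ) (hqnn : ∀ x y, 0 ≤ q x y)
    (hqcont : Continuous fun p : ℝ × ℝ => q p.1 p.2)
    (s : ℝ) (hs : 0 < s) (hrange : ∀ x u : ℝ, s < |u| → q x (x + u) = 0)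
    (a : ℝ)
    (P Ra Rac Tac : Lp ℂ 2 (piMeas π) →L[ℂ] Lp ℂ 2 (piMeas π))
    (hP : ∀ f : Lp ℂ 2 (piMeas π),
      ⇑(P f) =ᵐ[piMeas π]
        fun x => (mhR π q x : ℂ) * f x + ∫ y, (mhT π q x y : ℂ) * f y)
    (hRa : ∀ f : Lp ℂ 2 (piMeas π),
      ⇑(Ra f) =ᵐ[piMeas π] fun x => if |x| ≤ a then (mhR π q x : ℂ) * f x else 0)
    (hRac : ∀ f : Lp ℂ 2 (piMeas π),
      ⇑(Rac f) =ᵐ[piMeas π] fun x => if a < |x| then (mhR π q x : ℂ) * f x else 0)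
    (hTac : ∀ f : Lp ℂ 2 (piMeas π),
      ⇑(Tac f) =ᵐ[piMeas π]
        fun x => if a < |x| then (∫ y, (mhT π q x y : ℂ) * f y) else 0)
    (n : ℕ) (hn : 1 ≤ n) :
    ∃ K : Lp ℂ 2 (piMeas π) →L[ℂ] Lp ℂ 2 (piMeas π),
      IsCompactOperator ⇑K ∧ P ^ n = K + Ra ^ n + (Rac + Tac) ^ n := by
  have := isProbabilityMeasure_piMeas (fun x => (hπpos x).le) hπprob
  have ht := fun x y => mhT_eq_zero (fun x => (hπpos x).le) hqnn hrange (x := x) (y := y)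
  have hball : Metric.closedBall (0 : ℝ) a ⊆ Metric.closedBall 0 (a + s) :=
    Metric.closedBall_subset_closedBall (by linarith)
  have hinner : IsCompactOperator (P - Ra - Rac - Tac) :=
    (hasKernel_P_sub_Ra_sub_Rac_sub_Tac ht hP hRa hRac hTac).isCompactOperator hπpos hπcont
      (isCompact_closedBall 0 _) measurableSet_closedBall measurableSet_closedBall hball
      subset_rfl (continuous_mhT hπpos hπcont hqcont)
  have hlayer : IsCompactOperator (Tac * Ra) :=
    (hasKernel_Tac_mul_Ra hπpos hπcont.measurable ht hRa hTac).isCompactOperator hπpos hπcont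
      (isCompact_closedBall 0 _) (measurableSet_closedBall.diff measurableSet_closedBall)
      measurableSet_closedBall sdiff_subset hball
      ((continuous_mhT hπpos hπcont hqcont).mul
        ((continuous_mhR hπpos hπcont hqnn hqcont hrange).comp continuous_snd))
  have hmem := (compactOperatorIdeal ℂ _).pow_sub_pow_sub_pow_mem (a := Ra) (b := Rac + Tac)
    (by rw [← sub_sub]; exact mem_compactOperatorIdeal.2 hinner)
    (Ra_mul_Rac_add_Tac_eq_zero hRa hRac hTac)
    (by rw [Rac_add_Tac_mul_Ra hRa hRac]; exact mem_compactOperatorIdeal.2 hlayer)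
    (Nat.one_le_iff_ne_zero.1 hn)
  exact ⟨_, mem_compactOperatorIdeal.1 hmem, by abel⟩

theorem pow_decomposition
    (π : ℝ → ℝ) (hπpos : ∀ x, 0 < π x) (hπcont : Continuous π)
    (hπprob : ∫ x, π x = 1)
    (q : ℝ → ℝ → ℝ) (hqnn : ∀ x y, 0 ≤ q x y) (hqbdd : ∃ M, ∀ x y, q x y ≤ M)
    (hqcont : Continuous fun p : ℝ × ℝ => q p.1 p.2) (hqprob : ∀ x, ∫ y, q x y = 1)
    (s : ℝ) (hs : 0 < s) (hrange : ∀ x u : ℝ, s < |u| → q x (x + u) = 0)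
    (a : ℝ) (ha : 0 < a)
    (P Ra Rac Tac : Lp ℂ 2 (piMeas π) →L[ℂ] Lp ℂ 2 (piMeas π))
    (hP : ∀ f : Lp ℂ 2 (piMeas π),
      ⇑(P f) =ᵐ[piMeas π]
        fun x => (mhR π q x : ℂ) * f x + ∫ y, (mhT π q x y : ℂ) * f y)
    (hRa : ∀ f : Lp ℂ 2 (piMeas π),
      ⇑(Ra f) =ᵐ[piMeas π] fun x => if |x| ≤ a then (mhR π q x : ℂ) * f x else 0)
    (hRac : ∀ f : Lp ℂ 2 (piMeas π),
      ⇑(Rac f) =ᵐ[piMeas π] fun x => if a < |x| then (mhR π q x : ℂ) * f x else 0)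
    (hTac : ∀ f : Lp ℂ 2 (piMeas π),
      ⇑(Tac f) =ᵐ[piMeas π]
        fun x => if a < |x| then (∫ y, (mhT π q x y : ℂ) * f y) else 0)
    (n : ℕ) (hn : 1 ≤ n) :
    ∃ K : Lp ℂ 2 (piMeas π) →L[ℂ] Lp ℂ 2 (piMeas π),
      IsCompactOperator ⇑K ∧ P ^ n = K + Ra ^ n + (Rac + Tac) ^ n :=
  pow_decomposition_general π hπpos hπcont hπprob q hqnn hqcont s hs hrange a P Ra Rac Tac hP hRa
    hRac hTac n hn
end
end

section
/- Assume π is a positive continuous probability density on ℝ, q(x,y) := Δ(|x−y|) where Δ : ℝ → [0,∞) is continuous, supported on [−s,s] and positive on (−s,s) with ∫_ℝ Δ(|u|)du = 1, and there exists θ > 0 such that π is increasing on (−∞,−θ] and decreasing on [θ,+∞). Then sup_{x∈ℝ} r(x) < 1; in particular, for every a > 0, r_a := sup_{|x|≤a} r(x) < 1 and r_a' := sup_{|x|>a} r(x) < 1. -/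
open MeasureTheory Filter Topology

noncomputable section

/-!
From every `x` the chain can move, with a uniformly positive density, into a window of length
`s / 2` next to `x`: the proposal density is at least `δ = min Δ|[0, s/2]` there, and the
acceptance ratio `π y / π x` is either `≥ 1` (on the tails, choosing the window on the side where
`π` increases) or bounded below by `ρ > 0` (on a compact middle part, by continuity and positivity
of `π`). Hence `∫ t(x, ·) ≥ δ ρ s / 2` for every `x`, so `r ≤ 1 - δ ρ s / 2` everywhere.
-/

lemma mhT_nonneg {π : ℝ → ℝ} {q : ℝ → ℝ → ℝ} (hπ : ∀ x, 0 ≤ π x) (hq : ∀ x y, 0 ≤ q x y)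
    (x y : ℝ) : 0 ≤ mhT π q x y :=
  le_min (hq x y) (div_nonneg (mul_nonneg (hπ y) (hq y x)) (hπ x))

lemma mul_le_mhT {π : ℝ → ℝ} {q : ℝ → ℝ → ℝ} {x y δ ρ : ℝ} (hsymm : q y x = q x y)
    (hδ0 : 0 ≤ δ) (hδ : δ ≤ q x y) (hρ0 : 0 ≤ ρ) (hρ1 : ρ ≤ 1) (hρ : ρ ≤ π y / π x) :
    δ * ρ ≤ mhT π q x y := by
  refine le_min ?_ ?_
  · calc δ * ρ ≤ δ * 1 := mul_le_mul_of_nonneg_left hρ1 hδ0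
      _ ≤ q x y := by rwa [mul_one]
  · calc δ * ρ ≤ q x y * (π y / π x) := mul_le_mul hδ hρ hρ0 (hδ0.trans hδ)
      _ = π y * q y x / π x := by rw [hsymm]; ring

lemma integrable_mhT_abs_sub {Δ π : ℝ → ℝ} {s : ℝ} (hΔcont : Continuous Δ)
    (hΔsupp : ∀ u, s < |u| → Δ u = 0) (hπcont : Continuous π) (x : ℝ) :
    Integrable (mhT π (fun x y => Δ |x - y|) x) := by
  have hcont : Continuous (mhT π (fun x y => Δ |x - y|) x) := by unfold mhT; fun_prop
  refine hcont.integrable_of_hasCompactSupport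
    (HasCompactSupport.intro (isCompact_closedBall x s) fun y hy => ?_)
  have hfar : s < |y - x| := by simpa [Real.dist_eq] using hy
  have hfar' : s < |x - y| := by rwa [abs_sub_comm]
  rw [mhT, hΔsupp |x - y| (by rwa [abs_abs]), hΔsupp |y - x| (by rwa [abs_abs]), mul_zero,
    zero_div, min_self]

lemma mul_le_integral_of_le_on_Icc {f : ℝ → ℝ} {a h c : ℝ} (hf : Integrable f) (hf0 : 0 ≤ f)
    (hh : 0 ≤ h) (hc : ∀ y ∈ Set.Icc a (a + h), c ≤ f y) : c * h ≤ ∫ y, f y := by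
  have hvol : volume.real (Set.Icc a (a + h)) = h := by
    simp [Measure.real, Real.volume_Icc, hh]
  calc c * h = c * volume.real (Set.Icc a (a + h)) := by rw [hvol]
    _ ≤ ∫ y in Set.Icc a (a + h), f y :=
      setIntegral_ge_of_const_le_real measurableSet_Icc (by simp [Real.volume_Icc]) hc
        hf.integrableOn
    _ ≤ ∫ y, f y := setIntegral_le_integral hf (Eventually.of_forall hf0)

lemma exists_window_of_monotone_tails {π : ℝ → ℝ} {θ h : ℝ}
    (hmono : MonotoneOn π (Set.Iic (-θ))) (hanti : AntitoneOn π (Set.Ici θ)) (hh : 0 ≤ h)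
    (x : ℝ) : ∃ a, x ∈ Set.Icc a (a + h) ∧ ∀ y ∈ Set.Icc a (a + h),
      π x ≤ π y ∨ (x ∈ Set.Icc (-(θ + 2 * h)) (θ + 2 * h) ∧
        y ∈ Set.Icc (-(θ + 2 * h)) (θ + 2 * h)) := by
  rcases le_or_gt x (-(θ + h)) with hleft | hx
  · refine ⟨x, ⟨le_rfl, by linarith⟩, fun y ⟨hxy, hy⟩ => Or.inl ?_⟩
    exact hmono (Set.mem_Iic.2 (by linarith)) (Set.mem_Iic.2 (by linarith)) hxy
  rcases le_or_gt (θ + h) x with hright | hx'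
  · refine ⟨x - h, ⟨by linarith, by linarith⟩, fun y ⟨hy, hyx⟩ => Or.inl ?_⟩
    exact hanti (Set.mem_Ici.2 (by linarith)) (Set.mem_Ici.2 (by linarith)) (by linarith)
  · refine ⟨x, ⟨le_rfl, by linarith⟩, fun y ⟨hxy, hy⟩ => Or.inr ?_⟩
    exact ⟨⟨by linarith, by linarith⟩, ⟨by linarith, by linarith⟩⟩

lemma exists_forall_mhR_le_one_sub {s : ℝ} (hs : 0 < s) {Δ : ℝ → ℝ} (hΔnn : ∀ u, 0 ≤ Δ u)
    (hΔcont : Continuous Δ) (hΔsupp : ∀ u, s < |u| → Δ u = 0)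
    (hΔpos : ∀ u ∈ Set.Ioo (-s) s, 0 < Δ u) {π : ℝ → ℝ} (hπpos : ∀ x, 0 < π x)
    (hπcont : Continuous π) {θ : ℝ} (hπmono : MonotoneOn π (Set.Iic (-θ)))
    (hπanti : AntitoneOn π (Set.Ici θ)) :
    ∃ ε > 0, ∀ x, mhR π (fun x y => Δ |x - y|) x ≤ 1 - ε := by
  obtain ⟨δ, hδ, hΔδ⟩ := isCompact_Icc.exists_forall_le' hΔcont.continuousOn
    fun u (hu : u ∈ Set.Icc 0 (s / 2)) => hΔpos u ⟨by linarith [hu.1], by linarith [hu.2]⟩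
  have hratio : Continuous fun p : ℝ × ℝ => π p.2 / π p.1 :=
    (hπcont.comp continuous_snd).div (hπcont.comp continuous_fst) fun _ => (hπpos _).ne'
  obtain ⟨ρ, hρ, hπρ⟩ := ((isCompact_Icc (a := -(θ + 2 * (s / 2))) (b := θ + 2 * (s / 2))).prod
    isCompact_Icc).exists_forall_le' hratio.continuousOn fun _ _ => div_pos (hπpos _) (hπpos _)
  refine ⟨δ * min ρ 1 * (s / 2), by positivity, fun x => ?_⟩
  obtain ⟨a, ⟨hax, hxa⟩, hwindow⟩ :=
    exists_window_of_monotone_tails (h := s / 2) hπmono hπanti (by positivity) x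
  have hlow : ∀ y ∈ Set.Icc a (a + s / 2), δ * min ρ 1 ≤ mhT π (fun x y => Δ |x - y|) x y := by
    intro y hy
    refine mul_le_mhT (by rw [abs_sub_comm]) hδ.le
      (hΔδ _ ⟨abs_nonneg _, abs_le.2 ⟨by linarith [hy.2], by linarith [hy.1]⟩⟩)
      (le_min hρ.le zero_le_one) (min_le_right _ _) ?_
    rcases hwindow y hy with hxy | ⟨hxK, hyK⟩
    · exact (min_le_right _ _).trans ((one_le_div (hπpos x)).2 hxy)
    · exact (min_le_left _ _).trans (hπρ (x, y) ⟨hxK, hyK⟩)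
  have hmass := mul_le_integral_of_le_on_Icc (integrable_mhT_abs_sub hΔcont hΔsupp hπcont x)
    (mhT_nonneg (fun x => (hπpos x).le) (fun _ _ => hΔnn _) x) (by positivity) hlow
  rw [mhR]
  linarith

theorem sup_r_lt_one_monotone_tails_general
    (s : ℝ) (hs : 0 < s)
    (Δ : ℝ → ℝ) (hΔnn : ∀ u, 0 ≤ Δ u) (hΔcont : Continuous Δ)
    (hΔsupp : ∀ u, s < |u| → Δ u = 0)
    (hΔpos : ∀ u ∈ Set.Ioo (-s) s, 0 < Δ u)
    (π : ℝ → ℝ) (hπpos : ∀ x, 0 < π x) (hπcont : Continuous π)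
    (θ : ℝ)
    (hπmono : MonotoneOn π (Set.Iic (-θ)))
    (hπanti : AntitoneOn π (Set.Ici θ)) :
    sSup (Set.range (mhR π fun x y => Δ |x - y|)) < 1 ∧
      ∀ a : ℝ, 0 < a →
        sSup ((mhR π fun x y => Δ |x - y|) '' {x | |x| ≤ a}) < 1 ∧
        sSup ((mhR π fun x y => Δ |x - y|) '' {x | a < |x|}) < 1 := by
  obtain ⟨ε, hε, hr⟩ := exists_forall_mhR_le_one_sub hs hΔnn hΔcont hΔsupp hΔpos hπpos hπcont
    hπmono hπanti
  have hsup : ∀ S : Set ℝ, S.Nonempty → sSup ((mhR π fun x y => Δ |x - y|) '' S) < 1 :=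
    fun S hS => (csSup_le (hS.image _) (Set.forall_mem_image.2 fun x _ => hr x)).trans_lt
      (by linarith)
  refine ⟨by simpa using hsup Set.univ Set.univ_nonempty, fun a ha => ⟨?_, ?_⟩⟩
  · exact hsup _ ⟨0, by simp [ha.le]⟩
  · exact hsup _ ⟨a + 1, by simp [abs_of_pos (by linarith : 0 < a + 1)]⟩

theorem sup_r_lt_one_monotone_tails
    (s : ℝ) (hs : 0 < s)
    (Δ : ℝ → ℝ) (hΔnn : ∀ u, 0 ≤ Δ u) (hΔcont : Continuous Δ)
    (hΔsupp : ∀ u, s < |u| → Δ u = 0)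
    (hΔpos : ∀ u ∈ Set.Ioo (-s) s, 0 < Δ u)
    (hΔint : ∫ u, Δ |u| = 1)
    (π : ℝ → ℝ) (hπpos : ∀ x, 0 < π x) (hπcont : Continuous π)
    (hπprob : ∫ x, π x = 1)
    (θ : ℝ) (hθ : 0 < θ)
    (hπmono : MonotoneOn π (Set.Iic (-θ)))
    (hπanti : AntitoneOn π (Set.Ici θ)) :
    sSup (Set.range (mhR π fun x y => Δ |x - y|)) < 1 ∧
      ∀ a : ℝ, 0 < a →
        sSup ((mhR π fun x y => Δ |x - y|) '' {x | |x| ≤ a}) < 1 ∧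
        sSup ((mhR π fun x y => Δ |x - y|) '' {x | a < |x|}) < 1 :=
  sup_r_lt_one_monotone_tails_general s hs Δ hΔnn hΔcont hΔsupp hΔpos π hπpos hπcont θ hπmono hπanti
end
end
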